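/- Let t ↦ p_t solve d/dt log p_t(O_i) = D(p_t)(O_i) for each observation, where P_n[D(p_t)] = (1/n)∑_j (α_j^{(t)})² with α_j^{(t)} = (1/n)∑_i K^{(t)}(O_i,O_j). Then t ↦ P_n[log p_t] = (1/n)∑_i log p_t(O_i) is nondecreasing, and its derivative at t₁ vanishes if and only if the empirical mean embedding m_n^{(t₁)} = (1/n)∑_i k^{(t₁)}_{O_i} is zero in H_K^{(t₁)}. -/

import Mathlib

/-!
Along the flow, the derivative of the empirical log-likelihood is `(1/n) ∑ᵢ D(p_t)(Oᵢ)`. Exchanging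
the two sums turns this into `(1/n) ∑ⱼ (α_j^{(t)})²` with `α_j^{(t)} = ⟪m_n^{(t)}, k^{(t)}_{O_j}⟫`,
which is nonnegative; it vanishes iff `m_n^{(t)}` is orthogonal to every `k^{(t)}_{O_j}`, hence to
their average `m_n^{(t)}` itself.
-/

open Finset
open scoped RealInnerProductSpace

theorem Finset.sum_mul_sum_mul_comm {ι : Type*} [Fintype ι] (c : ℝ) (α : ι → ℝ)
    (K : ι → ι → ℝ) : ∑ i, c * ∑ j, α j * K i j = ∑ j, α j * (c * ∑ i, K i j) := by
  simp only [mul_sum]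
  rw [sum_comm]
  exact sum_congr rfl fun j _ => sum_congr rfl fun i _ => by ring

section MeanEmbedding

variable {H : Type*} [NormedAddCommGroup H] [InnerProductSpace ℝ H] {ι : Type*} [Fintype ι]

theorem inner_smul_sum_left (c : ℝ) (v : ι → H) (x : H) :
    ⟪c • ∑ i, v i, x⟫ = c * ∑ i, ⟪v i, x⟫ := by
  rw [inner_smul_left, sum_inner, RCLike.conj_to_real]

theorem smul_sum_eq_zero_of_forall_inner_eq_zero {c : ℝ} {v : ι → H}
    (h : ∀ j, ⟪c • ∑ i, v i, v j⟫ = 0) : c • ∑ i, v i = 0 := by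
  refine inner_self_eq_zero (𝕜 := ℝ) |>.mp ?_
  rw [inner_smul_right, inner_sum]
  simp [h]

theorem mul_sum_sq_inner_smul_sum_eq_zero_iff (c : ℝ) (v : ι → H) :
    c * ∑ j, ⟪c • ∑ i, v i, v j⟫ ^ 2 = 0 ↔ c • ∑ i, v i = 0 := by
  rcases eq_or_ne c 0 with rfl | hc
  · simp
  refine ⟨fun h => smul_sum_eq_zero_of_forall_inner_eq_zero fun j => ?_, fun h => by simp [h]⟩
  have hsum := (mul_eq_zero.mp h).resolve_left hc
  exact pow_eq_zero_iff two_ne_zero |>.mp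
    ((sum_eq_zero_iff_of_nonneg fun j _ => sq_nonneg _).mp hsum j (mem_univ j))

end MeanEmbedding

theorem stmt14_general {H : Type*} [NormedAddCommGroup H] [InnerProductSpace ℝ H]
    (n : ℕ)
    (p : ℝ → Fin n → ℝ)
    (k : ℝ → Fin n → H)
    (Kt : ℝ → Fin n → Fin n → ℝ)
    (hKt : ∀ t i j, Kt t i j = ⟪k t i, k t j⟫)
    (a : ℝ → Fin n → ℝ)
    (ha : ∀ t j, a t j = ((1 : ℝ) / n) * ∑ i, Kt t i j)
    (D : ℝ → Fin n → ℝ)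
    (hD : ∀ t i, D t i = ((1 : ℝ) / n) * ∑ j, a t j * Kt t i j)
    (hflow : ∀ t i, HasDerivAt (fun s => Real.log (p s i)) (D t i) t) :
    Monotone (fun t => ((1 : ℝ) / n) * ∑ i, Real.log (p t i)) ∧
    ∀ t₁ : ℝ,
      (((1 : ℝ) / n) * ∑ i, D t₁ i = 0 ↔
        ((1 : ℝ) / n) • ∑ i, k t₁ i = (0 : H)) := by
  have hα : ∀ t j, a t j = ⟪((1 : ℝ) / n) • ∑ i, k t i, k t j⟫ := fun t j => by
    rw [ha, inner_smul_sum_left]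
    simp only [hKt]
  have hrate : ∀ t, ((1 : ℝ) / n) * ∑ i, D t i = ((1 : ℝ) / n) * ∑ j, a t j ^ 2 := fun t => by
    simp only [hD, sum_mul_sum_mul_comm, ← ha, sq]
  have hderiv : ∀ t, HasDerivAt (fun s => ((1 : ℝ) / n) * ∑ i, Real.log (p s i))
      (((1 : ℝ) / n) * ∑ i, D t i) t := fun t =>
    (HasDerivAt.fun_sum fun i _ => hflow t i).const_mul _
  refine ⟨monotone_of_deriv_nonneg (fun t => (hderiv t).differentiableAt) fun t => ?_,
    fun t₁ => ?_⟩
  · rw [(hderiv t).deriv, hrate]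
    positivity
  · rw [hrate]
    simp only [hα]
    exact mul_sum_sq_inner_smul_sum_eq_zero_iff _ _

/-- Monotonicity and stationarity of the empirical log-likelihood
along the ULFS–KDPE flow. The densities evaluated at the observations are
`p t i = p_t(O_i) > 0`, the mean-zero RKHS sections at the observations are
`k t i = k^{(t)}_{O_i}` with kernel `K^{(t)}(O_i,O_j) = ⟪k t i, k t j⟫`,
`α_j^{(t)} = (1/n) ∑_i K^{(t)}(O_i,O_j)`,
`D(p_t)(O_i) = (1/n) ∑_j α_j^{(t)} K^{(t)}(O_i,O_j)`, and the flow satisfies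
`d/dt log p_t(O_i) = D(p_t)(O_i)`. Then `t ↦ (1/n) ∑_i log p_t(O_i)` is
nondecreasing, and its derivative `(1/n) ∑_i D(p_{t₁})(O_i)` vanishes at `t₁`
iff the empirical mean embedding `m_n^{(t₁)} = (1/n) ∑_i k^{(t₁)}_{O_i}` is
zero. -/
theorem stmt14 {H : Type*} [NormedAddCommGroup H] [InnerProductSpace ℝ H]
    (n : ℕ) (hn : 0 < n)
    (p : ℝ → Fin n → ℝ) (hpos : ∀ t i, 0 < p t i)
    (k : ℝ → Fin n → H)
    (Kt : ℝ → Fin n → Fin n → ℝ)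
    (hKt : ∀ t i j, Kt t i j = ⟪k t i, k t j⟫)
    (a : ℝ → Fin n → ℝ)
    (ha : ∀ t j, a t j = ((1 : ℝ) / n) * ∑ i, Kt t i j)
    (D : ℝ → Fin n → ℝ)
    (hD : ∀ t i, D t i = ((1 : ℝ) / n) * ∑ j, a t j * Kt t i j)
    (hflow : ∀ t i, HasDerivAt (fun s => Real.log (p s i)) (D t i) t) :
    Monotone (fun t => ((1 : ℝ) / n) * ∑ i, Real.log (p t i)) ∧
    ∀ t₁ : ℝ,
      (((1 : ℝ) / n) * ∑ i, D t₁ i = 0 ↔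
        ((1 : ℝ) / n) • ∑ i, k t₁ i = (0 : H)) :=
  stmt14_general n p k Kt hKt a ha D hD hflow
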